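/- Let u ∈ U, τ ∈ (0,1), v ∈ B(0,ρ_max), and let u^ε be the perturbed control equal to v on (τ−ε, τ] and to u elsewhere, with x₁ and x₁^ε the corresponding solutions on [0,1] of ẋ = f(x,·) starting at x₀. Then the state variation Ψ₁(t) := lim_{ε→0⁺} (x₁^ε(t) − x₁(t))/ε uniquely exists for all t ∈ [τ, 1] and satisfies the linear variational ODE Ψ̇₁(t) = (∂f/∂x)(x₁(t), u(t)) Ψ₁(t) with initial condition Ψ₁(τ) = f(x₁(τ), v) − f(x₁(τ), u(τ)). -/

import Mathlib

/-!
Before the needle `(τ - ε, τ]` the perturbed and nominal trajectories coincide, and on the needle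
they separate by `O(ε)`; averaging the jump `f(x, v) - f(x, u)` of the vector field over the
needle and using left continuity at `τ` gives `ε⁻¹ (x^ε(τ) - x(τ)) → f(x(τ), v) - f(x(τ), u(τ))`.
After `τ` both trajectories use the same control, so the difference quotient solves the
linearized equation up to a first-order Taylor remainder, which is `o(1)` uniformly on `[τ, 1]`
because `f` is `C¹` and the states stay in a compact set. Grönwall's inequality then carries the
convergence at `τ` over to all of `[τ, 1]`. The limit is the solution of a linear Volterra
equation with bounded measurable kernel: it exists because some iterate of the Picard map is a
contraction, and it is unique by Grönwall again.
-/

open Set MeasureTheory Filter Topology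

noncomputable section

open scoped Classical

abbrev EucSp (n : ℕ) := EuclideanSpace ℝ (Fin n)

/-- A function is piecewise continuous on `s` if it is continuous within `s` outside of a
finite set of points. -/
def PiecewiseContinuousOn {E : Type*} [TopologicalSpace E] (u : ℝ → E) (s : Set ℝ) : Prop :=
  ∃ D : Finset ℝ, ∀ t ∈ s, t ∉ D → ContinuousWithinAt u s t

/-- Admissible controls: piecewise continuous functions on `[0, T]` with values in the
closed ball of radius `ρmax`. -/
def AdmissibleCtrl {m : ℕ} (T ρmax : ℝ) (u : ℝ → EucSp m) : Prop :=
  PiecewiseContinuousOn u (Set.Icc 0 T) ∧ ∀ t ∈ Set.Icc (0 : ℝ) T, ‖u t‖ ≤ ρmax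

/-- `x` is a (Carathéodory) solution of `ẋ = f(x, u(t))` on `[a, b]`, in integral form. -/
def IsSolOn {nx m : ℕ} (f : EucSp nx → EucSp m → EucSp nx) (u : ℝ → EucSp m)
    (a b : ℝ) (x : ℝ → EucSp nx) : Prop :=
  ContinuousOn x (Set.Icc a b) ∧
    ∀ t ∈ Set.Icc a b, x t = x a + ∫ s in a..t, f (x s) (u s)

/-- The modes `x i : [i-1, i] → ℝ^{n_x}` of the hybrid system with time-driven switching:
`x 1 0 = x₀`, each mode solves `ẋ = f(x, u)` on `[i-1, i]`, and modes are linked by the jump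
map `g` with observation `y i`. -/
def HybridModes {nx ny m : ℕ} (T : ℕ) (f : EucSp nx → EucSp m → EucSp nx)
    (g : EucSp nx → EucSp ny → EucSp nx) (u : ℝ → EucSp m) (y : ℕ → EucSp ny)
    (x₀ : EucSp nx) (x : ℕ → ℝ → EucSp nx) : Prop :=
  x 1 0 = x₀ ∧
    (∀ i : ℕ, 1 ≤ i → i ≤ T → IsSolOn f u ((i : ℝ) - 1) (i : ℝ) (x i)) ∧
    (∀ i : ℕ, 1 ≤ i → i + 1 ≤ T → x (i + 1) (i : ℝ) = g (x i (i : ℝ)) (y i))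

/-- The hybrid trajectory `X` built from the modes: `X t = x i t` on `[i-1, i)` and
`X T = g (x T T) (y T)`. -/
def IsHybridTraj {nx ny : ℕ} (T : ℕ) (g : EucSp nx → EucSp ny → EucSp nx)
    (y : ℕ → EucSp ny) (x : ℕ → ℝ → EucSp nx) (X : ℝ → EucSp nx) : Prop :=
  (∀ i : ℕ, 1 ≤ i → i ≤ T → ∀ t ∈ Set.Ico ((i : ℝ) - 1) (i : ℝ), X t = x i t) ∧
    X (T : ℝ) = g (x T (T : ℝ)) (y T)

/-- The perturbed control: equal to `v` on `(τ - ε, τ]` and to `u` elsewhere. -/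
def perturb {m : ℕ} (u : ℝ → EucSp m) (τ : ℝ) (v : EucSp m) (ε : ℝ) : ℝ → EucSp m :=
  fun t => if τ - ε < t ∧ t ≤ τ then v else u t

section IntegralEquations

variable {E : Type*} [NormedAddCommGroup E] [NormedSpace ℝ E]

theorem le_mul_exp_of_le_add_mul_integral {g : ℝ → ℝ} {a b C K : ℝ} (hK : 0 ≤ K)
    (hg : ContinuousOn g (Icc a b)) (h : ∀ t ∈ Icc a b, g t ≤ C + K * ∫ s in a..t, g s) :
    ∀ t ∈ Icc a b, g t ≤ C * Real.exp (K * (t - a)) := by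
  set G : ℝ → ℝ := fun t => ∫ s in a..t, g s
  have hG : ContinuousOn G (Icc a b) := by
    rcases le_or_gt a b with hab | hab
    · simpa only [uIcc_of_le hab] using intervalIntegral.continuousOn_primitive_interval'
        (hg.intervalIntegrable_of_Icc hab) left_mem_uIcc
    · simp [Icc_eq_empty_of_lt hab]
  have hG' : ∀ t ∈ Ico a b, HasDerivWithinAt G (g t) (Ici t) t := fun t ht =>
    have hmem : Icc a b ∈ 𝓝[>] t := Icc_mem_nhdsGT_of_mem ht
    intervalIntegral.integral_hasDerivWithinAt_right
      ((hg.mono (Icc_subset_Icc le_rfl ht.2.le)).intervalIntegrable_of_Icc ht.1)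
      ((hg.stronglyMeasurableAtFilter_nhdsWithin measurableSet_Icc t).filter_mono
        (nhdsWithin_le_of_mem hmem))
      ((hg t (Ico_subset_Icc_self ht)).mono_of_mem_nhdsWithin hmem)
  have hGbound := le_gronwallBound_of_liminf_deriv_right_le hG
    (fun t ht _ hr => (hG' t ht).liminf_right_slope_le hr) (δ := 0) (by simp [G])
    (fun t ht => (h t (Ico_subset_Icc_self ht)).trans_eq (add_comm _ _))
  intro t ht
  calc g t ≤ C + K * G t := h t ht
    _ ≤ C + K * gronwallBound 0 K C (t - a) := by gcongr; exact hGbound t ht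
    _ = C * Real.exp (K * (t - a)) := by
      rcases hK.eq_or_lt with rfl | hKpos
      · simp
      · rw [gronwallBound_of_K_ne_0 hKpos.ne']
        field_simp
        ring

theorem norm_le_of_eq_add_integral {w F : ℝ → E} {a b δ K : ℝ} (hδ : 0 ≤ δ) (hK : 0 ≤ K)
    (hw : ContinuousOn w (Icc a b)) (heq : ∀ t ∈ Icc a b, w t = w a + ∫ s in a..t, F s)
    (hF : ∀ s ∈ Ioc a b, ‖F s‖ ≤ δ + K * ‖w s‖) :
    ∀ t ∈ Icc a b, ‖w t‖ ≤ (‖w a‖ + δ * (b - a)) * Real.exp (K * (b - a)) := by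
  have hwn : ContinuousOn (fun s => ‖w s‖) (Icc a b) := hw.norm
  have hle : ∀ t ∈ Icc a b, ‖w t‖ ≤ (‖w a‖ + δ * (b - a)) + K * ∫ s in a..t, ‖w s‖ := by
    intro t ht
    have hint : IntervalIntegrable (fun s => ‖w s‖) volume a t :=
      (hwn.mono (Icc_subset_Icc le_rfl ht.2)).intervalIntegrable_of_Icc ht.1
    have hF' : ‖∫ s in a..t, F s‖ ≤ ∫ s in a..t, (δ + K * ‖w s‖) :=
      intervalIntegral.norm_integral_le_of_norm_le ht.1
        (ae_of_all _ fun s hs => hF s ⟨hs.1, hs.2.trans ht.2⟩)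
        (intervalIntegrable_const.add (hint.const_mul K))
    rw [intervalIntegral.integral_add intervalIntegrable_const (hint.const_mul K),
      intervalIntegral.integral_const, intervalIntegral.integral_const_mul, smul_eq_mul] at hF'
    calc ‖w t‖ ≤ ‖w a‖ + ‖∫ s in a..t, F s‖ := heq t ht ▸ norm_add_le _ _
      _ ≤ ‖w a‖ + ((t - a) * δ + K * ∫ s in a..t, ‖w s‖) := by gcongr
      _ ≤ (‖w a‖ + δ * (b - a)) + K * ∫ s in a..t, ‖w s‖ := by
        nlinarith [ht.2]
  intro t ht
  refine (le_mul_exp_of_le_add_mul_integral hK hwn hle t ht).trans ?_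
  gcongr
  · exact add_nonneg (norm_nonneg _) (mul_nonneg hδ (sub_nonneg.2 (ht.1.trans ht.2)))
  · exact ht.2

theorem eq_add_integral_of_mem {w F : ℝ → E} {a b c : ℝ} (hF : IntervalIntegrable F volume a b)
    (heq : ∀ t ∈ Icc a b, w t = w a + ∫ s in a..t, F s) (hc : c ∈ Icc a b) :
    ∀ t ∈ Icc c b, w t = w c + ∫ s in c..t, F s := by
  intro t ht
  have ht' : t ∈ Icc a b := ⟨hc.1.trans ht.1, ht.2⟩
  have hsub : ∀ r ∈ Icc a b, uIcc a r ⊆ uIcc a b := fun r hr =>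
    uIcc_subset_uIcc_left (Icc_subset_uIcc hr)
  rw [← intervalIntegral.integral_interval_sub_left (hF.mono_set (hsub t ht'))
    (hF.mono_set (hsub c hc)), heq t ht', heq c hc]
  abel

theorem norm_inv_smul_integral_sub_le [CompleteSpace E] {g : ℝ → E} {c : E} {a ε M : ℝ}
    (hε : 0 < ε) (hg : IntervalIntegrable g volume (a - ε) a)
    (hM : ∀ s ∈ Ioc (a - ε) a, ‖g s - c‖ ≤ M) :
    ‖ε⁻¹ • (∫ s in (a - ε)..a, g s) - c‖ ≤ M := by
  have hle : a - ε ≤ a := by linarith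
  have hint := intervalIntegral.norm_integral_le_of_norm_le_const
    (f := fun s => g s - c) (fun s hs => hM s (uIoc_of_le hle ▸ hs))
  rw [intervalIntegral.integral_sub hg intervalIntegrable_const, intervalIntegral.integral_const,
    sub_sub_cancel, abs_of_pos hε] at hint
  calc ‖ε⁻¹ • (∫ s in (a - ε)..a, g s) - c‖
      = ε⁻¹ * ‖(∫ s in (a - ε)..a, g s) - ε • c‖ := by
        rw [← norm_smul_of_nonneg (inv_nonneg.2 hε.le), smul_sub, smul_smul,
          inv_mul_cancel₀ hε.ne', one_smul]
    _ ≤ ε⁻¹ * (M * ε) := by gcongr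
    _ = M := by field_simp [hε.ne']

end IntegralEquations

section Volterra

open scoped BoundedContinuousFunction

variable {E F : Type*} [NormedAddCommGroup E] [NormedSpace ℝ E] [NormedAddCommGroup F]
  [NormedSpace ℝ F]

theorem intervalIntegrable_clm_apply {A : ℝ → E →L[ℝ] F} {g : ℝ → E} {a b K : ℝ} (hab : a ≤ b)
    (hA : AEStronglyMeasurable A (volume.restrict (Icc a b))) (hAK : ∀ s ∈ Icc a b, ‖A s‖ ≤ K)
    (hg : ContinuousOn g (Icc a b)) :
    IntervalIntegrable (fun s => A s (g s)) volume a b := by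
  obtain ⟨M, hM⟩ := isCompact_Icc.exists_bound_of_continuousOn hg
  refine (intervalIntegrable_iff_integrableOn_Icc_of_le hab).2 <| IntegrableOn.of_bound
    measure_Icc_lt_top (isBoundedBilinearMap_apply.continuous.comp_aestronglyMeasurable₂ hA
      (hg.aestronglyMeasurable measurableSet_Icc)) (K * M) ?_
  filter_upwards [ae_restrict_mem measurableSet_Icc] with s hs
  exact (A s).le_of_opNorm_le_of_le (hAK s hs) (hM s hs)

theorem integral_mul_pow_div_factorial (K a t : ℝ) (n : ℕ) :
    ∫ s in a..t, K * ((K * (s - a)) ^ n / n.factorial) =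
      (K * (t - a)) ^ (n + 1) / (n + 1).factorial := by
  simp only [mul_pow, mul_div_assoc]
  rw [intervalIntegral.integral_const_mul, intervalIntegral.integral_const_mul,
    intervalIntegral.integral_div, intervalIntegral.integral_comp_sub_right (· ^ n),
    integral_pow, Nat.factorial_succ]
  push_cast
  field_simp
  ring

variable {A : ℝ → E →L[ℝ] E} {a b K : ℝ}

/- Clamping the time to `[a, b]` keeps the Picard iterates bounded, so that they live in the
complete space `ℝ →ᵇ E`. -/
theorem exists_picard_map (hab : a ≤ b) (hA : AEStronglyMeasurable A (volume.restrict (Icc a b)))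
    (hAK : ∀ s ∈ Icc a b, ‖A s‖ ≤ K) (c : E) :
    ∃ T : (ℝ →ᵇ E) → ℝ →ᵇ E, ∀ g t, T g t = c + ∫ s in a..projIcc a b hab t, A s (g s) := by
  have hP : ∀ t, (projIcc a b hab t : ℝ) ∈ Icc a b := fun t => (projIcc a b hab t).2
  have hK : 0 ≤ K := (norm_nonneg _).trans (hAK a (left_mem_Icc.2 hab))
  refine ⟨fun g => .ofNormedAddCommGroup _ ?_ (‖c‖ + K * ‖g‖ * (b - a)) fun t => ?_,
    fun g t => rfl⟩
  · refine continuous_const.add <| ContinuousOn.comp_continuous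
      (g := fun x => ∫ s in a..x, A s (g s)) ?_ (continuous_subtype_val.comp continuous_projIcc) hP
    simpa only [uIcc_of_le hab] using intervalIntegral.continuousOn_primitive_interval'
      (intervalIntegrable_clm_apply hab hA hAK g.continuous.continuousOn) left_mem_uIcc
  · refine (norm_add_le _ _).trans ?_
    gcongr
    refine (intervalIntegral.norm_integral_le_of_norm_le_const (C := K * ‖g‖)
      fun s hs => ?_).trans ?_
    · rw [uIoc_of_le (hP t).1] at hs
      exact (A s).le_of_opNorm_le_of_le (hAK s ⟨hs.1.le, hs.2.trans (hP t).2⟩)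
        (g.norm_coe_le_norm s)
    · rw [abs_of_nonneg (sub_nonneg.2 (hP t).1)]
      gcongr
      exact (hP t).2

theorem norm_iterate_picard_sub_le (hab : a ≤ b)
    (hA : AEStronglyMeasurable A (volume.restrict (Icc a b))) (hAK : ∀ s ∈ Icc a b, ‖A s‖ ≤ K)
    {c : E} {T : (ℝ →ᵇ E) → ℝ →ᵇ E}
    (hT : ∀ g t, T g t = c + ∫ s in a..projIcc a b hab t, A s (g s)) (n : ℕ) (g h : ℝ →ᵇ E)
    (t : ℝ) :
    ‖T^[n] g t - T^[n] h t‖ ≤ (K * (projIcc a b hab t - a)) ^ n / n.factorial * dist g h := by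
  induction n generalizing t with
  | zero => simpa [dist_eq_norm] using g.dist_coe_le_dist (g := h) t
  | succ n ih =>
    have hP := (projIcc a b hab t).2
    have hsub : uIcc a (projIcc a b hab t) ⊆ uIcc a b :=
      uIcc_subset_uIcc_left (Icc_subset_uIcc hP)
    have hint : ∀ g : ℝ →ᵇ E, IntervalIntegrable (fun s => A s (g s)) volume a
        (projIcc a b hab t) := fun g =>
      (intervalIntegrable_clm_apply hab hA hAK g.continuous.continuousOn).mono_set hsub
    rw [Function.iterate_succ_apply', Function.iterate_succ_apply', hT, hT,
      add_sub_add_left_eq_sub, ← intervalIntegral.integral_sub (hint _) (hint _),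
      ← integral_mul_pow_div_factorial, ← intervalIntegral.integral_mul_const]
    refine intervalIntegral.norm_integral_le_of_norm_le hP.1
      (ae_of_all _ fun s hs => ?_) (Continuous.intervalIntegrable (by fun_prop) _ _)
    have hs' : s ∈ Icc a b := ⟨hs.1.le, hs.2.trans hP.2⟩
    have hgh := ih s
    rw [projIcc_of_mem hab hs'] at hgh
    rw [← map_sub, mul_assoc]
    exact (A s).le_of_opNorm_le_of_le (hAK s hs') hgh

theorem exists_continuousOn_eq_add_integral_clm [CompleteSpace E] (hab : a ≤ b)
    (hA : AEStronglyMeasurable A (volume.restrict (Icc a b))) (hAK : ∀ s ∈ Icc a b, ‖A s‖ ≤ K)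
    (c : E) :
    ∃ Ψ : ℝ → E, ContinuousOn Ψ (Icc a b) ∧ ∀ t ∈ Icc a b, Ψ t = c + ∫ s in a..t, A s (Ψ s) := by
  have hK : 0 ≤ K := (norm_nonneg _).trans (hAK a (left_mem_Icc.2 hab))
  obtain ⟨T, hT⟩ := exists_picard_map hab hA hAK c
  have hq : ∀ n : ℕ, 0 ≤ (K * (b - a)) ^ n / n.factorial := fun n =>
    div_nonneg (pow_nonneg (mul_nonneg hK (sub_nonneg.2 hab)) n) n.factorial.cast_nonneg
  have hlip : ∀ n (g h : ℝ →ᵇ E),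
      dist (T^[n] g) (T^[n] h) ≤ (K * (b - a)) ^ n / n.factorial * dist g h := by
    refine fun n g h => (BoundedContinuousFunction.dist_le (mul_nonneg (hq n) dist_nonneg)).2
      fun t => (dist_eq_norm _ _).trans_le <|
        (norm_iterate_picard_sub_le hab hA hAK hT n g h t).trans ?_
    have hP := (projIcc a b hab t).2
    have h0 : 0 ≤ K * (projIcc a b hab t - a) := mul_nonneg hK (sub_nonneg.2 hP.1)
    gcongr
    exact hP.2
  obtain ⟨n, hn⟩ : ∃ n : ℕ, (K * (b - a)) ^ n / n.factorial < 1 :=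
    ((FloorSemiring.tendsto_pow_div_factorial_atTop (K * (b - a))).eventually_lt_const
      one_pos).exists
  have hcontr : ContractingWith ⟨_, hq n⟩ (T^[n]) := ⟨hn, LipschitzWith.of_dist_le_mul (hlip n)⟩
  set Ψ := hcontr.fixedPoint (T^[n])
  have hΨ : T Ψ = Ψ := hcontr.isFixedPt_fixedPoint_iterate
  refine ⟨Ψ, Ψ.continuous.continuousOn, fun t ht => ?_⟩
  have := hT Ψ t
  rwa [hΨ, projIcc_of_mem hab ht] at this

theorem eqOn_of_eq_add_integral_clm (hA : AEStronglyMeasurable A (volume.restrict (Icc a b)))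
    (hAK : ∀ s ∈ Icc a b, ‖A s‖ ≤ K)
    {Ψ Φ : ℝ → E} (hΨ : ContinuousOn Ψ (Icc a b)) (hΦ : ContinuousOn Φ (Icc a b))
    (hΨeq : ∀ t ∈ Icc a b, Ψ t = Ψ a + ∫ s in a..t, A s (Ψ s))
    (hΦeq : ∀ t ∈ Icc a b, Φ t = Φ a + ∫ s in a..t, A s (Φ s)) (ha : Ψ a = Φ a) :
    EqOn Ψ Φ (Icc a b) := by
  intro t ht
  have hab : a ≤ b := ht.1.trans ht.2
  have hK : 0 ≤ K := (norm_nonneg _).trans (hAK a (left_mem_Icc.2 hab))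
  have heq : ∀ t ∈ Icc a b, Ψ t - Φ t = (Ψ a - Φ a) + ∫ s in a..t, A s (Ψ s - Φ s) := by
    intro t ht
    have hsub : uIcc a t ⊆ uIcc a b := uIcc_subset_uIcc_left (Icc_subset_uIcc ht)
    simp only [map_sub]
    rw [intervalIntegral.integral_sub
      ((intervalIntegrable_clm_apply hab hA hAK hΨ).mono_set hsub)
      ((intervalIntegrable_clm_apply hab hA hAK hΦ).mono_set hsub), hΨeq t ht, hΦeq t ht]
    abel
  have h0 := norm_le_of_eq_add_integral (w := fun t => Ψ t - Φ t) le_rfl hK (hΨ.sub hΦ) heq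
    (fun s hs => ((A s).le_of_opNorm_le (hAK s (Ioc_subset_Icc_self hs)) _).trans_eq
      (zero_add _).symm) t ht
  simpa [ha, sub_eq_zero] using h0

end Volterra

section Measurability

variable {E U F : Type*} [NormedAddCommGroup E] [NormedAddCommGroup U] [ProperSpace U]
  [NormedAddCommGroup F]

theorem intervalIntegrable_comp_of_norm_le {f : E → U → F}
    (hf : Continuous fun p : E × U => f p.1 p.2) {x : ℝ → E} {u : ℝ → U} {a b ρ : ℝ}
    (hab : a ≤ b) (hx : ContinuousOn x (Icc a b))
    (hu : AEStronglyMeasurable u (volume.restrict (Icc a b))) (hρ : ∀ s ∈ Icc a b, ‖u s‖ ≤ ρ) :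
    IntervalIntegrable (fun s => f (x s) (u s)) volume a b := by
  obtain ⟨M, hM⟩ := ((isCompact_Icc.image_of_continuousOn hx).prod
    (isCompact_closedBall (0 : U) ρ)).exists_bound_of_continuousOn hf.continuousOn
  refine (intervalIntegrable_iff_integrableOn_Icc_of_le hab).2 <| IntegrableOn.of_bound
    measure_Icc_lt_top (hf.comp_aestronglyMeasurable₂ (g := f)
      (hx.aestronglyMeasurable measurableSet_Icc) hu) M ?_
  filter_upwards [ae_restrict_mem measurableSet_Icc] with s hs
  exact hM (x s, u s) ⟨mem_image_of_mem x hs, mem_closedBall_zero_iff.2 (hρ s hs)⟩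

theorem PiecewiseContinuousOn.aestronglyMeasurable {X : Type*} [TopologicalSpace X]
    [TopologicalSpace.PseudoMetrizableSpace X] {u : ℝ → X} {s : Set ℝ}
    (hu : PiecewiseContinuousOn u s) (hs : MeasurableSet s) :
    AEStronglyMeasurable u (volume.restrict s) := by
  obtain ⟨D, hD⟩ := hu
  have hcont : ContinuousOn u (s \ D) := fun t ht => (hD t ht.1 ht.2).mono sdiff_subset
  rw [← Measure.restrict_congr_set (sdiff_null_ae_eq_self (D.finite_toSet.measure_zero _))]
  exact hcont.aestronglyMeasurable (hs.diff D.finite_toSet.measurableSet)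

end Measurability

section PartialDerivative

variable {E U F : Type*} [NormedAddCommGroup E] [NormedSpace ℝ E] [NormedAddCommGroup U]
  [NormedSpace ℝ U] [NormedAddCommGroup F] [NormedSpace ℝ F] {f : E → U → F}

theorem ContDiff.hasFDerivAt_partial_left (hf : ContDiff ℝ 1 fun p : E × U => f p.1 p.2)
    (z : E) (w : U) :
    HasFDerivAt (fun y => f y w)
      ((fderiv ℝ (fun p : E × U => f p.1 p.2) (z, w)).comp (.inl ℝ E U)) z :=
  HasFDerivAt.comp z (f := fun y => (y, w)) ((hf.differentiable one_ne_zero) (z, w)).hasFDerivAt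
    (hasFDerivAt_prodMk_left z w)

theorem ContDiff.continuous_fderiv_partial_left (hf : ContDiff ℝ 1 fun p : E × U => f p.1 p.2) :
    Continuous fun p : E × U => fderiv ℝ (fun y => f y p.2) p.1 := by
  simp only [fun p : E × U => (hf.hasFDerivAt_partial_left p.1 p.2).fderiv]
  exact (hf.continuous_fderiv one_ne_zero).clm_comp continuous_const

theorem IsCompact.exists_norm_sub_sub_fderiv_partial_le
    (hf : ContDiff ℝ 1 fun p : E × U => f p.1 p.2) {S : Set (E × U)} (hS : IsCompact S)
    {η : ℝ} (hη : 0 < η) :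
    ∃ δ > 0, ∀ p ∈ S, ∀ h : E, ‖h‖ < δ →
      ‖f (p.1 + h) p.2 - f p.1 p.2 - fderiv ℝ (fun y => f y p.2) p.1 h‖ ≤ η * ‖h‖ := by
  have hB := hf.continuous_fderiv_partial_left
  obtain ⟨δ, hδ, hclose⟩ := Metric.mem_uniformity_dist.1 <|
    hS.uniformContinuousAt_of_continuousAt _ (fun p _ => hB.continuousAt)
      (Metric.dist_mem_uniformity hη)
  refine ⟨δ, hδ, fun p hp h hh => ?_⟩
  have hseg : ∀ y ∈ segment ℝ p.1 (p.1 + h), dist p (y, p.2) < δ := by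
    intro y hy
    have hy' : y ∈ Metric.ball p.1 δ := (convex_ball p.1 δ).segment_subset (Metric.mem_ball_self hδ)
      (by simpa using hh) hy
    rw [Prod.dist_eq, dist_self, max_eq_left dist_nonneg, dist_comm]
    exact hy'
  have := (convex_segment p.1 (p.1 + h)).norm_image_sub_le_of_norm_fderiv_le'
    (f := fun y => f y p.2) (fun y _ => (hf.hasFDerivAt_partial_left y p.2).differentiableAt)
    (fun y hy => by
      have h' := hclose (hseg y hy) hp
      simp only [mem_ofPred_eq] at h'
      rw [dist_comm, dist_eq_norm] at h'
      exact h'.le)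
    (left_mem_segment ℝ _ _) (right_mem_segment ℝ _ _)
  rwa [add_sub_cancel_left] at this

end PartialDerivative

section Limits

theorem ContinuousWithinAt.eventually_forall_Ioc_dist_lt {X : Type*} [PseudoMetricSpace X]
    {g : ℝ → X} {τ η : ℝ} (hg : ContinuousWithinAt g (Iic τ) τ) (hη : 0 < η) :
    ∀ᶠ ε in 𝓝[>] 0, ∀ s ∈ Ioc (τ - ε) τ, dist (g s) (g τ) < η := by
  obtain ⟨δ, hδ, hg⟩ := Metric.continuousWithinAt_iff.1 hg η hη
  filter_upwards [Ioo_mem_nhdsGT hδ] with ε hε s hs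
  refine hg hs.2 ?_
  rw [Real.dist_eq, abs_of_nonpos (sub_nonpos.2 hs.2)]
  linarith [hs.1, hε.2]

theorem tendsto_of_forall_eventually_norm_sub_le {α F : Type*} [SeminormedAddCommGroup F]
    {l : Filter α} {g : α → F} {c : F} {C : ℝ} (h : ∀ η > 0, ∀ᶠ a in l, ‖g a - c‖ ≤ C * η) :
    Tendsto g l (𝓝 c) := by
  refine Metric.tendsto_nhds.2 fun r hr => ?_
  have hC : 0 < |C| + 1 := by positivity
  filter_upwards [h (r / (|C| + 1)) (by positivity)] with a ha
  rw [dist_eq_norm]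
  calc ‖g a - c‖ ≤ C * (r / (|C| + 1)) := ha
    _ ≤ |C| * (r / (|C| + 1)) := by gcongr; exact le_abs_self C
    _ < r := by
      rw [mul_div_assoc', div_lt_iff₀ hC]
      nlinarith

theorem eventually_const_mul_lt (C : ℝ) {η : ℝ} (hη : 0 < η) :
    ∀ᶠ ε in 𝓝[>] (0 : ℝ), C * ε < η :=
  nhdsWithin_le_nhds <|
    ((continuous_const_mul C).tendsto' 0 0 (mul_zero C)).eventually (eventually_lt_nhds hη)

end Limits

section Perturbation

variable {m : ℕ} {u : ℝ → EucSp m} {τ ε s : ℝ} {v : EucSp m}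

theorem perturb_of_mem (hs : s ∈ Ioc (τ - ε) τ) : perturb u τ v ε s = v := if_pos hs

theorem perturb_of_notMem (hs : s ∉ Ioc (τ - ε) τ) : perturb u τ v ε s = u s := if_neg hs

theorem perturb_eq_add_indicator :
    perturb u τ v ε = u + (Ioc (τ - ε) τ).indicator fun s => v - u s := by
  ext1 s
  by_cases hs : s ∈ Ioc (τ - ε) τ
  · simp [perturb_of_mem hs, indicator_of_mem hs]
  · simp [perturb_of_notMem hs, indicator_of_notMem hs]

theorem MeasureTheory.AEStronglyMeasurable.perturb {μ : Measure ℝ}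
    (hu : AEStronglyMeasurable u μ) : AEStronglyMeasurable (perturb u τ v ε) μ := by
  rw [perturb_eq_add_indicator]
  exact hu.add ((aestronglyMeasurable_const.sub hu).indicator measurableSet_Ioc)

theorem norm_perturb_le {S : Set ℝ} {ρ : ℝ} (hu : ∀ s ∈ S, ‖u s‖ ≤ ρ) (hv : ‖v‖ ≤ ρ) :
    ∀ s ∈ S, ‖perturb u τ v ε s‖ ≤ ρ := by
  intro s hs
  by_cases hs' : s ∈ Ioc (τ - ε) τ
  · rwa [perturb_of_mem hs']
  · rw [perturb_of_notMem hs']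
    exact hu s hs

end Perturbation

section Needle

variable {nx m : ℕ}

structure NeedleVariation (f : EucSp nx → EucSp m → EucSp nx) (ρ K : ℝ) (u : ℝ → EucSp m)
    (τ : ℝ) (v : EucSp m) (x : ℝ → EucSp nx) (xe : ℝ → ℝ → EucSp nx) : Prop where
  contDiff : ContDiff ℝ 1 fun p : EucSp nx × EucSp m => f p.1 p.2
  lipschitz : ∀ (x' x'' : EucSp nx) (u' u'' : EucSp m), ‖u'‖ ≤ ρ → ‖u''‖ ≤ ρ →
    ‖f x' u' - f x'' u''‖ ≤ K * (‖x' - x''‖ + ‖u' - u''‖)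
  nonneg : 0 ≤ K
  aestronglyMeasurable : AEStronglyMeasurable u (volume.restrict (Icc 0 1))
  norm_le : ∀ s ∈ Icc (0 : ℝ) 1, ‖u s‖ ≤ ρ
  norm_v_le : ‖v‖ ≤ ρ
  τ_mem : τ ∈ Ioo (0 : ℝ) 1
  isSolOn : IsSolOn f u 0 1 x
  isSolOn_perturb : ∀ ε ∈ Ioc 0 τ, IsSolOn f (perturb u τ v ε) 0 1 (xe ε)
  initial_eq : ∀ ε ∈ Ioc 0 τ, xe ε 0 = x 0

namespace NeedleVariation

variable {f : EucSp nx → EucSp m → EucSp nx} {ρ K τ ε : ℝ} {u : ℝ → EucSp m} {v : EucSp m}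
  {x : ℝ → EucSp nx} {xe : ℝ → ℝ → EucSp nx}

theorem intervalIntegrable_rhs (h : NeedleVariation f ρ K u τ v x xe) :
    IntervalIntegrable (fun s => f (x s) (u s)) volume 0 1 :=
  intervalIntegrable_comp_of_norm_le h.contDiff.continuous zero_le_one h.isSolOn.1
    h.aestronglyMeasurable h.norm_le

theorem intervalIntegrable_rhs_perturb (h : NeedleVariation f ρ K u τ v x xe)
    (hε : ε ∈ Ioc 0 τ) :
    IntervalIntegrable (fun s => f (xe ε s) (perturb u τ v ε s)) volume 0 1 :=
  intervalIntegrable_comp_of_norm_le h.contDiff.continuous zero_le_one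
    (h.isSolOn_perturb ε hε).1 h.aestronglyMeasurable.perturb
    (norm_perturb_le h.norm_le h.norm_v_le)

theorem intervalIntegrable_rhs_sub (h : NeedleVariation f ρ K u τ v x xe) (hε : ε ∈ Ioc 0 τ)
    {a b : ℝ} (ha : a ∈ Icc (0 : ℝ) 1) (hb : b ∈ Icc (0 : ℝ) 1) :
    IntervalIntegrable (fun s => f (xe ε s) (perturb u τ v ε s) - f (x s) (u s)) volume a b :=
  ((h.intervalIntegrable_rhs_perturb hε).sub h.intervalIntegrable_rhs).mono_set
    (uIcc_subset_uIcc (Icc_subset_uIcc ha) (Icc_subset_uIcc hb))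

theorem sub_eq_add_integral (h : NeedleVariation f ρ K u τ v x xe) (hε : ε ∈ Ioc 0 τ) :
    ∀ t ∈ Icc (0 : ℝ) 1, xe ε t - x t = (xe ε 0 - x 0) +
      ∫ s in 0..t, (f (xe ε s) (perturb u τ v ε s) - f (x s) (u s)) := by
  intro t ht
  have hsub : uIcc 0 t ⊆ uIcc 0 1 := uIcc_subset_uIcc_left (Icc_subset_uIcc ht)
  rw [intervalIntegral.integral_sub ((h.intervalIntegrable_rhs_perturb hε).mono_set hsub)
    (h.intervalIntegrable_rhs.mono_set hsub), (h.isSolOn_perturb ε hε).2 t ht, h.isSolOn.2 t ht]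
  abel

theorem sub_eq_add_integral_of_mem (h : NeedleVariation f ρ K u τ v x xe) (hε : ε ∈ Ioc 0 τ)
    {c : ℝ} (hc : c ∈ Icc (0 : ℝ) 1) :
    ∀ t ∈ Icc c 1, xe ε t - x t = (xe ε c - x c) +
      ∫ s in c..t, (f (xe ε s) (perturb u τ v ε s) - f (x s) (u s)) :=
  eq_add_integral_of_mem (h.intervalIntegrable_rhs_sub hε (left_mem_Icc.2 zero_le_one)
    (right_mem_Icc.2 zero_le_one)) (h.sub_eq_add_integral hε) hc

theorem norm_rhs_sub_le (h : NeedleVariation f ρ K u τ v x xe) {s : ℝ}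
    (hs : s ∈ Icc (0 : ℝ) 1) :
    ‖f (xe ε s) (perturb u τ v ε s) - f (x s) (u s)‖ ≤
      K * ‖perturb u τ v ε s - u s‖ + K * ‖xe ε s - x s‖ := by
  rw [add_comm, ← mul_add]
  exact h.lipschitz _ _ _ _ (norm_perturb_le h.norm_le h.norm_v_le s hs) (h.norm_le s hs)

theorem norm_rhs_sub_le_of_notMem (h : NeedleVariation f ρ K u τ v x xe) {s : ℝ}
    (hs : s ∈ Icc (0 : ℝ) 1) (hs' : s ∉ Ioc (τ - ε) τ) :
    ‖f (xe ε s) (perturb u τ v ε s) - f (x s) (u s)‖ ≤ K * ‖xe ε s - x s‖ := by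
  simpa [perturb_of_notMem hs'] using h.norm_rhs_sub_le (xe := xe) (ε := ε) hs

theorem eqOn_before (h : NeedleVariation f ρ K u τ v x xe) (hε : ε ∈ Ioc 0 τ) :
    EqOn (xe ε) x (Icc 0 (τ - ε)) := by
  have hsub : Icc 0 (τ - ε) ⊆ Icc (0 : ℝ) 1 := Icc_subset_Icc le_rfl (by linarith [hε.1, h.τ_mem.2])
  intro t ht
  have := norm_le_of_eq_add_integral le_rfl h.nonneg
    (((h.isSolOn_perturb ε hε).1.sub h.isSolOn.1).mono hsub)
    (fun t ht => h.sub_eq_add_integral hε t (hsub ht))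
    (fun s hs => (h.norm_rhs_sub_le_of_notMem (hsub (Ioc_subset_Icc_self hs))
      fun hs' => hs'.1.not_ge hs.2).trans_eq (zero_add _).symm) t ht
  simpa [h.initial_eq ε hε, sub_eq_zero] using this

theorem sub_eq_integral_needle (h : NeedleVariation f ρ K u τ v x xe) (hε : ε ∈ Ioc 0 τ) :
    ∀ t ∈ Icc (τ - ε) 1, xe ε t - x t =
      ∫ s in (τ - ε)..t, (f (xe ε s) (perturb u τ v ε s) - f (x s) (u s)) := by
  have hc : τ - ε ∈ Icc (0 : ℝ) 1 := ⟨sub_nonneg.2 hε.2, by linarith [hε.1, h.τ_mem.2]⟩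
  intro t ht
  rw [h.sub_eq_add_integral_of_mem hε hc t ht, h.eqOn_before hε ⟨hc.1, le_rfl⟩, sub_self,
    zero_add]

theorem norm_sub_le_on_needle (h : NeedleVariation f ρ K u τ v x xe) (hε : ε ∈ Ioc 0 τ) :
    ∀ t ∈ Icc (τ - ε) τ, ‖xe ε t - x t‖ ≤ 2 * K * ρ * ε * Real.exp K := by
  have hK := h.nonneg
  have hρ : 0 ≤ ρ := (norm_nonneg v).trans h.norm_v_le
  have hτ1 := h.τ_mem.2
  have hc : τ - ε ∈ Icc (0 : ℝ) 1 := ⟨sub_nonneg.2 hε.2, by linarith [hε.1]⟩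
  have hsub : Icc (τ - ε) τ ⊆ Icc (0 : ℝ) 1 := Icc_subset_Icc hc.1 hτ1.le
  have hF : ∀ s ∈ Ioc (τ - ε) τ, ‖f (xe ε s) (perturb u τ v ε s) - f (x s) (u s)‖ ≤
      2 * K * ρ + K * ‖xe ε s - x s‖ := by
    intro s hs
    have hs01 := hsub (Ioc_subset_Icc_self hs)
    refine (h.norm_rhs_sub_le hs01).trans ?_
    rw [perturb_of_mem hs]
    have : ‖v - u s‖ ≤ 2 * ρ :=
      (norm_sub_le _ _).trans (by linarith [h.norm_v_le, h.norm_le s hs01])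
    nlinarith
  intro t ht
  have := norm_le_of_eq_add_integral (w := fun t => xe ε t - x t) (by positivity) hK
    (((h.isSolOn_perturb ε hε).1.sub h.isSolOn.1).mono hsub)
    (fun t ht => h.sub_eq_add_integral_of_mem hε hc t ⟨ht.1, ht.2.trans hτ1.le⟩) hF t ht
  rw [h.eqOn_before hε ⟨hc.1, le_rfl⟩, sub_self, norm_zero, zero_add, sub_sub_cancel] at this
  exact this.trans (mul_le_mul_of_nonneg_left
    (Real.exp_le_exp.2 (mul_le_of_le_one_right hK (by linarith [hε.2])))
    (mul_nonneg (mul_nonneg (mul_nonneg zero_le_two hK) hρ) hε.1.le))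

theorem norm_sub_le_const_mul (h : NeedleVariation f ρ K u τ v x xe) (hε : ε ∈ Ioc 0 τ) :
    ∀ t ∈ Icc (τ - ε) 1, ‖xe ε t - x t‖ ≤ 2 * K * ρ * Real.exp (2 * K) * ε := by
  obtain ⟨hτ0, hτ1⟩ := h.τ_mem
  have hK := h.nonneg
  have ha : 0 ≤ 2 * K * ρ * ε := mul_nonneg (mul_nonneg (mul_nonneg zero_le_two hK)
    ((norm_nonneg v).trans h.norm_v_le)) hε.1.le
  have hexp : Real.exp (2 * K) = Real.exp K * Real.exp K := by rw [two_mul, Real.exp_add]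
  intro t ht
  rcases le_total t τ with htτ | hτt
  · calc ‖xe ε t - x t‖ ≤ 2 * K * ρ * ε * Real.exp K := h.norm_sub_le_on_needle hε t ⟨ht.1, htτ⟩
      _ ≤ 2 * K * ρ * ε * Real.exp (2 * K) := by gcongr; linarith
      _ = 2 * K * ρ * Real.exp (2 * K) * ε := by ring
  · have := norm_le_of_eq_add_integral le_rfl hK
      (((h.isSolOn_perturb ε hε).1.sub h.isSolOn.1).mono (Icc_subset_Icc hτ0.le le_rfl))
      (h.sub_eq_add_integral_of_mem hε ⟨hτ0.le, hτ1.le⟩)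
      (fun s hs => (h.norm_rhs_sub_le_of_notMem ⟨hτ0.le.trans hs.1.le, hs.2⟩
        fun hs' => hs.1.not_ge hs'.2).trans_eq (zero_add _).symm) t ⟨hτt, ht.2⟩
    calc ‖xe ε t - x t‖ ≤ (‖xe ε τ - x τ‖ + 0 * (1 - τ)) * Real.exp (K * (1 - τ)) := this
      _ ≤ (2 * K * ρ * ε * Real.exp K) * Real.exp K := by
        rw [zero_mul, add_zero]
        gcongr
        · exact h.norm_sub_le_on_needle hε τ ⟨by linarith [hε.1], le_rfl⟩
        · exact mul_le_of_le_one_right hK (by linarith)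
      _ = 2 * K * ρ * Real.exp (2 * K) * ε := by rw [hexp]; ring

theorem norm_rhs_sub_jump_le (h : NeedleVariation f ρ K u τ v x xe) (hε : ε ∈ Ioc 0 τ) {s : ℝ}
    (hs : s ∈ Ioc (τ - ε) τ) :
    ‖(f (xe ε s) (perturb u τ v ε s) - f (x s) (u s)) - (f (x τ) v - f (x τ) (u τ))‖ ≤
      K * ‖xe ε s - x s‖ + 2 * K * ‖x s - x τ‖ + K * ‖u s - u τ‖ := by
  have hτ : τ ∈ Icc (0 : ℝ) 1 := ⟨h.τ_mem.1.le, h.τ_mem.2.le⟩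
  have hs01 : s ∈ Icc (0 : ℝ) 1 := ⟨by linarith [hs.1, hε.2], hs.2.trans hτ.2⟩
  have h1 := h.lipschitz (xe ε s) (x τ) v v h.norm_v_le h.norm_v_le
  have h2 := h.lipschitz (x s) (x τ) (u s) (u τ) (h.norm_le s hs01) (h.norm_le τ hτ)
  have h3 : ‖xe ε s - x τ‖ ≤ ‖xe ε s - x s‖ + ‖x s - x τ‖ :=
    norm_sub_le_norm_sub_add_norm_sub _ _ _
  rw [sub_self, norm_zero, add_zero] at h1
  rw [perturb_of_mem hs]
  calc _ = ‖(f (xe ε s) v - f (x τ) v) - (f (x s) (u s) - f (x τ) (u τ))‖ := by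
        congr 1; abel
    _ ≤ ‖f (xe ε s) v - f (x τ) v‖ + ‖f (x s) (u s) - f (x τ) (u τ)‖ := norm_sub_le _ _
    _ ≤ _ := by nlinarith [h.nonneg]

theorem tendsto_quotient_at (h : NeedleVariation f ρ K u τ v x xe)
    (huτ : ContinuousWithinAt u (Iic τ) τ) :
    Tendsto (fun ε => ε⁻¹ • (xe ε τ - x τ)) (𝓝[>] 0) (𝓝 (f (x τ) v - f (x τ) (u τ))) := by
  obtain ⟨hτ0, hτ1⟩ := h.τ_mem
  have hxτ : ContinuousWithinAt x (Iic τ) τ :=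
    (h.isSolOn.1 τ ⟨hτ0.le, hτ1.le⟩).mono_of_mem_nhdsWithin (Icc_mem_nhdsLE_of_mem ⟨hτ0, hτ1.le⟩)
  refine tendsto_of_forall_eventually_norm_sub_le (C := 4 * K) fun η hη => ?_
  filter_upwards [Ioc_mem_nhdsGT hτ0, hxτ.eventually_forall_Ioc_dist_lt hη,
    huτ.eventually_forall_Ioc_dist_lt hη,
    eventually_const_mul_lt (2 * K * ρ * Real.exp (2 * K)) hη] with ε hε hx hu hCε
  have hc : τ - ε ∈ Icc (0 : ℝ) 1 := ⟨sub_nonneg.2 hε.2, by linarith [hε.1]⟩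
  rw [h.sub_eq_integral_needle hε τ ⟨by linarith [hε.1], hτ1.le⟩]
  refine norm_inv_smul_integral_sub_le hε.1 (h.intervalIntegrable_rhs_sub hε hc
    ⟨hτ0.le, hτ1.le⟩) fun s hs => (h.norm_rhs_sub_jump_le hε hs).trans ?_
  have hxes := (h.norm_sub_le_const_mul hε s ⟨hs.1.le, hs.2.trans hτ1.le⟩).trans hCε.le
  have hxs := (dist_eq_norm (x s) (x τ) ▸ hx s hs).le
  have hus := (dist_eq_norm (u s) (u τ) ▸ hu s hs).le
  have hK := h.nonneg
  calc _ ≤ K * η + 2 * K * η + K * η := by gcongr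
    _ = 4 * K * η := by ring

theorem aestronglyMeasurable_fderiv (h : NeedleVariation f ρ K u τ v x xe) :
    AEStronglyMeasurable (fun s => fderiv ℝ (fun z => f z (u s)) (x s))
      (volume.restrict (Icc 0 1)) :=
  h.contDiff.continuous_fderiv_partial_left.comp_aestronglyMeasurable₂
    (g := fun z w => fderiv ℝ (fun y => f y w) z)
    (h.isSolOn.1.aestronglyMeasurable measurableSet_Icc) h.aestronglyMeasurable

theorem norm_fderiv_le (h : NeedleVariation f ρ K u τ v x xe) :
    ∀ s ∈ Icc (0 : ℝ) 1, ‖fderiv ℝ (fun z => f z (u s)) (x s)‖ ≤ K := fun s hs =>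
  norm_fderiv_le_of_lip' ℝ h.nonneg <| .of_forall fun z => by
    simpa using h.lipschitz z (x s) (u s) (u s) (h.norm_le s hs) (h.norm_le s hs)

theorem quotient_sub_eq_add_integral (h : NeedleVariation f ρ K u τ v x xe) (hε : ε ∈ Ioc 0 τ)
    {Ψ : ℝ → EucSp nx} (hΨ : ContinuousOn Ψ (Icc τ 1))
    (hΨeq : ∀ t ∈ Icc τ 1, Ψ t = Ψ τ + ∫ s in τ..t, fderiv ℝ (fun z => f z (u s)) (x s) (Ψ s)) :
    ∀ t ∈ Icc τ 1, ε⁻¹ • (xe ε t - x t) - Ψ t = (ε⁻¹ • (xe ε τ - x τ) - Ψ τ) +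
      ∫ s in τ..t, (ε⁻¹ • (f (xe ε s) (perturb u τ v ε s) - f (x s) (u s)) -
        fderiv ℝ (fun z => f z (u s)) (x s) (Ψ s)) := by
  have hτ : τ ∈ Icc (0 : ℝ) 1 := ⟨h.τ_mem.1.le, h.τ_mem.2.le⟩
  have hsub : Icc τ 1 ⊆ Icc (0 : ℝ) 1 := Icc_subset_Icc hτ.1 le_rfl
  intro t ht
  have hG : IntervalIntegrable
      (fun s => ε⁻¹ • (f (xe ε s) (perturb u τ v ε s) - f (x s) (u s))) volume τ t :=
    (h.intervalIntegrable_rhs_sub hε hτ (hsub ht)).smul ε⁻¹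
  have hAΨ := intervalIntegrable_clm_apply ht.1
    (h.aestronglyMeasurable_fderiv.mono_set (Icc_subset_Icc hτ.1 ht.2))
    (fun s hs => h.norm_fderiv_le s ⟨hτ.1.trans hs.1, hs.2.trans ht.2⟩)
    (hΨ.mono (Icc_subset_Icc le_rfl ht.2))
  rw [intervalIntegral.integral_sub hG hAΨ, intervalIntegral.integral_smul,
    h.sub_eq_add_integral_of_mem hε hτ t ht, hΨeq t ht, smul_add]
  abel

theorem norm_quotient_rhs_sub_le (h : NeedleVariation f ρ K u τ v x xe) (hε : 0 < ε)
    {Ψ : ℝ → EucSp nx} {s : ℝ} (hs : s ∈ Ioc τ 1) :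
    ‖ε⁻¹ • (f (xe ε s) (perturb u τ v ε s) - f (x s) (u s)) -
        fderiv ℝ (fun z => f z (u s)) (x s) (Ψ s)‖ ≤
      ε⁻¹ * ‖f (xe ε s) (u s) - f (x s) (u s) -
        fderiv ℝ (fun z => f z (u s)) (x s) (xe ε s - x s)‖ +
      K * ‖ε⁻¹ • (xe ε s - x s) - Ψ s‖ := by
  set A := fderiv ℝ (fun z => f z (u s)) (x s)
  rw [perturb_of_notMem fun hs' => hs.1.not_ge hs'.2]
  have hsplit : ε⁻¹ • (f (xe ε s) (u s) - f (x s) (u s)) - A (Ψ s) =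
      ε⁻¹ • (f (xe ε s) (u s) - f (x s) (u s) - A (xe ε s - x s)) +
        A (ε⁻¹ • (xe ε s - x s) - Ψ s) := by
    simp only [map_sub, map_smul, smul_sub]
    abel
  rw [hsplit]
  refine (norm_add_le _ _).trans (add_le_add (le_of_eq ?_)
    (A.le_of_opNorm_le (h.norm_fderiv_le s ⟨h.τ_mem.1.le.trans hs.1.le, hs.2⟩) _))
  rw [norm_smul, Real.norm_eq_abs, abs_of_pos (inv_pos.2 hε)]

theorem eventually_norm_quotient_sub_le (h : NeedleVariation f ρ K u τ v x xe)
    {Ψ : ℝ → EucSp nx} (hΨ : ContinuousOn Ψ (Icc τ 1))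
    (hΨeq : ∀ t ∈ Icc τ 1, Ψ t = Ψ τ + ∫ s in τ..t, fderiv ℝ (fun z => f z (u s)) (x s) (Ψ s))
    {η : ℝ} (hη : 0 < η) :
    ∀ᶠ ε in 𝓝[>] 0, ∀ t ∈ Icc τ 1,
      ‖ε⁻¹ • (xe ε t - x t) - Ψ t‖ ≤ (‖ε⁻¹ • (xe ε τ - x τ) - Ψ τ‖ + η) * Real.exp K := by
  obtain ⟨hτ0, hτ1⟩ := h.τ_mem
  have hsub : Icc τ 1 ⊆ Icc (0 : ℝ) 1 := Icc_subset_Icc hτ0.le le_rfl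
  set C := 2 * K * ρ * Real.exp (2 * K)
  have hC : 0 ≤ C := mul_nonneg (mul_nonneg (mul_nonneg zero_le_two h.nonneg)
    ((norm_nonneg v).trans h.norm_v_le)) (Real.exp_pos _).le
  obtain ⟨δ, hδ, htaylor⟩ := ((isCompact_Icc.image_of_continuousOn (h.isSolOn.1.mono hsub)).prod
    (isCompact_closedBall (0 : EucSp m) ρ)).exists_norm_sub_sub_fderiv_partial_le h.contDiff
    (η := η / (C + 1)) (by positivity)
  filter_upwards [Ioc_mem_nhdsGT hτ0, eventually_const_mul_lt C hδ] with ε hε hCε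
  have hF : ∀ s ∈ Ioc τ 1,
      ‖ε⁻¹ • (f (xe ε s) (perturb u τ v ε s) - f (x s) (u s)) -
        fderiv ℝ (fun z => f z (u s)) (x s) (Ψ s)‖ ≤
      η + K * ‖ε⁻¹ • (xe ε s - x s) - Ψ s‖ := by
    intro s hs
    refine (h.norm_quotient_rhs_sub_le hε.1 hs).trans (add_le_add_left ?_ _)
    have hz : ‖xe ε s - x s‖ ≤ C * ε :=
      h.norm_sub_le_const_mul hε s ⟨by linarith [hs.1, hε.1], hs.2⟩
    have hR := htaylor (x s, u s) ⟨mem_image_of_mem _ (Ioc_subset_Icc_self hs),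
      mem_closedBall_zero_iff.2 (h.norm_le s (hsub (Ioc_subset_Icc_self hs)))⟩
      (xe ε s - x s) (hz.trans_lt hCε)
    rw [add_sub_cancel] at hR
    calc ε⁻¹ * _ ≤ ε⁻¹ * (η / (C + 1) * (C * ε)) :=
          mul_le_mul_of_nonneg_left (hR.trans (by gcongr)) (inv_nonneg.2 hε.1.le)
      _ = η * (C / (C + 1)) := by field_simp [hε.1.ne']
      _ ≤ η := mul_le_of_le_one_right hη.le ((div_le_one (by positivity)).2 (by linarith))
  intro t ht
  refine (norm_le_of_eq_add_integral (w := fun t => ε⁻¹ • (xe ε t - x t) - Ψ t) hη.le h.nonneg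
    ((((h.isSolOn_perturb ε hε).1.sub h.isSolOn.1).mono hsub).const_smul ε⁻¹ |>.sub hΨ)
    (h.quotient_sub_eq_add_integral hε hΨ hΨeq) hF t ht).trans ?_
  have h1 : η * (1 - τ) ≤ η := mul_le_of_le_one_right hη.le (by linarith)
  have h2 : K * (1 - τ) ≤ K := mul_le_of_le_one_right h.nonneg (by linarith)
  gcongr

theorem tendsto_quotient (h : NeedleVariation f ρ K u τ v x xe)
    (huτ : ContinuousWithinAt u (Iic τ) τ) {Ψ : ℝ → EucSp nx} (hΨ : ContinuousOn Ψ (Icc τ 1))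
    (hΨτ : Ψ τ = f (x τ) v - f (x τ) (u τ))
    (hΨeq : ∀ t ∈ Icc τ 1, Ψ t = Ψ τ + ∫ s in τ..t, fderiv ℝ (fun z => f z (u s)) (x s) (Ψ s))
    {t : ℝ} (ht : t ∈ Icc τ 1) :
    Tendsto (fun ε => ε⁻¹ • (xe ε t - x t)) (𝓝[>] 0) (𝓝 (Ψ t)) := by
  have hτ := tendsto_iff_norm_sub_tendsto_zero.1 (hΨτ ▸ h.tendsto_quotient_at huτ)
  refine tendsto_of_forall_eventually_norm_sub_le (C := 2 * Real.exp K) fun η hη => ?_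
  filter_upwards [h.eventually_norm_quotient_sub_le hΨ hΨeq hη,
    hτ.eventually (eventually_le_nhds hη)] with ε hε hετ
  calc _ ≤ (‖ε⁻¹ • (xe ε τ - x τ) - Ψ τ‖ + η) * Real.exp K := hε t ht
    _ ≤ (η + η) * Real.exp K := by gcongr
    _ = 2 * Real.exp K * η := by ring

end NeedleVariation

end Needle

/-- Variational equation, Lemma 15: the state variation
`Ψ₁(t) = lim_{ε→0⁺} (x₁^ε(t) − x₁(t))/ε` uniquely exists on `[τ, 1]` and satisfies the
linear variational equation `Ψ̇₁ = (∂f/∂x)(x₁, u) Ψ₁` with initial condition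
`Ψ₁(τ) = f(x₁(τ), v) − f(x₁(τ), u(τ))`. -/
theorem variational_equation {nx m : ℕ} (T : ℕ) (hT : 1 ≤ T)
    (ρmax K₁ : ℝ) (hK₁ : 1 ≤ K₁)
    (f : EucSp nx → EucSp m → EucSp nx)
    (hf : ContDiff ℝ 1 fun p : EucSp nx × EucSp m => f p.1 p.2)
    (hLip : ∀ (x' x'' : EucSp nx) (u' u'' : EucSp m), ‖u'‖ ≤ ρmax → ‖u''‖ ≤ ρmax →
      ‖f x' u' - f x'' u''‖ ≤ K₁ * (‖x' - x''‖ + ‖u' - u''‖))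
    (u : ℝ → EucSp m) (hu : AdmissibleCtrl (T : ℝ) ρmax u)
    (τ : ℝ) (hτ : τ ∈ Set.Ioo (0 : ℝ) 1) (v : EucSp m) (hv : ‖v‖ ≤ ρmax)
    (huτ : ContinuousWithinAt u (Set.Iic τ) τ)
    (x₀ : EucSp nx) (x : ℝ → EucSp nx) (xe : ℝ → ℝ → EucSp nx)
    (hxnom : x 0 = x₀ ∧ IsSolOn f u 0 1 x)
    (hxe : ∀ ε ∈ Set.Icc (0 : ℝ) τ,
      xe ε 0 = x₀ ∧ IsSolOn f (perturb u τ v ε) 0 1 (xe ε)) :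
    ∃ Ψ : ℝ → EucSp nx,
      (∀ t ∈ Set.Icc τ 1,
        Tendsto (fun ε : ℝ => ε⁻¹ • (xe ε t - x t)) (𝓝[>] 0) (𝓝 (Ψ t))) ∧
      Ψ τ = f (x τ) v - f (x τ) (u τ) ∧
      ContinuousOn Ψ (Set.Icc τ 1) ∧
      (∀ t ∈ Set.Icc τ 1,
        Ψ t = Ψ τ + ∫ s in τ..t, (fderiv ℝ (fun z => f z (u s)) (x s)) (Ψ s)) ∧
      ∀ Ψ' : ℝ → EucSp nx, ContinuousOn Ψ' (Set.Icc τ 1) →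
        Ψ' τ = f (x τ) v - f (x τ) (u τ) →
        (∀ t ∈ Set.Icc τ 1,
          Ψ' t = Ψ' τ + ∫ s in τ..t, (fderiv ℝ (fun z => f z (u s)) (x s)) (Ψ' s)) →
        ∀ t ∈ Set.Icc τ 1, Ψ' t = Ψ t := by
  have h01 : Icc (0 : ℝ) 1 ⊆ Icc 0 T := Icc_subset_Icc le_rfl (by exact_mod_cast hT)
  have h : NeedleVariation f ρmax K₁ u τ v x xe :=
    { contDiff := hf
      lipschitz := hLip
      nonneg := zero_le_one.trans hK₁
      aestronglyMeasurable := (hu.1.aestronglyMeasurable measurableSet_Icc).mono_set h01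
      norm_le := fun s hs => hu.2 s (h01 hs)
      norm_v_le := hv
      τ_mem := hτ
      isSolOn := hxnom.2
      isSolOn_perturb := fun ε hε => (hxe ε (Ioc_subset_Icc_self hε)).2
      initial_eq := fun ε hε => (hxe ε (Ioc_subset_Icc_self hε)).1.trans hxnom.1.symm }
  have hτ1 : Icc τ 1 ⊆ Icc (0 : ℝ) 1 := Icc_subset_Icc hτ.1.le le_rfl
  have hA := h.aestronglyMeasurable_fderiv.mono_set hτ1
  have hAK := fun s hs => h.norm_fderiv_le s (hτ1 hs)
  obtain ⟨Ψ, hΨ, hΨeq⟩ := exists_continuousOn_eq_add_integral_clm hτ.2.le hA hAK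
    (f (x τ) v - f (x τ) (u τ))
  have hΨτ : Ψ τ = f (x τ) v - f (x τ) (u τ) := by
    simpa using hΨeq τ (left_mem_Icc.2 hτ.2.le)
  rw [← hΨτ] at hΨeq
  exact ⟨Ψ, fun t ht => h.tendsto_quotient huτ hΨ hΨτ hΨeq ht, hΨτ, hΨ, hΨeq,
    fun Ψ' hΨ' hΨ'τ hΨ'eq => eqOn_of_eq_add_integral_clm hA hAK hΨ' hΨ hΨ'eq hΨeq
      (hΨ'τ.trans hΨτ.symm)⟩
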